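/- For any ASM program P over ℱ, agreeability implies uniformity for its explore sets: if V is any set of states such that all states in V agree on the values of all terms in Γ_P(V) := ⋂_{X∈V} Γ_P(X), then Γ_P(X) = Γ_P(Y) for all X, Y ∈ V. -/

import Mathlib

open scoped Classical

/-- Ground terms over a vocabulary `F`: a function symbol applied to a list of terms. -/
inductive GTerm (F : Type) : Type where
  | app : F → List (GTerm F) → GTerm F

/-- The subterm relation on ground terms. -/
inductive Subterm {F : Type} : GTerm F → GTerm F → Prop where
  | refl (t : GTerm F) : Subterm t t
  | arg {s t : GTerm F} {f : F} {args : List (GTerm F)} :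
      t ∈ args → Subterm s t → Subterm s (GTerm.app f args)

/-- A state: a first-order structure over vocabulary `F`, with base set drawn
from a common universe `U`, interpreting every function symbol. -/
structure State (F U : Type) where
  base : Set U
  interp : F → List U → U
  closed : ∀ (f : F) (as : List U), (∀ a ∈ as, a ∈ base) → interp f as ∈ base

mutual
/-- Value of a ground term in a state. -/
def evalT {F U : Type} (X : State F U) : GTerm F → U
  | GTerm.app f args => X.interp f (evalList X args)

/-- Values of a list of ground terms in a state. -/
def evalList {F U : Type} (X : State F U) : List (GTerm F) → List U
  | [] => []
  | t :: ts => evalT X t :: evalList X ts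
end

/-- The interpretation of the nullary symbol `trueS` in state `X`. -/
def tval {F U : Type} (trueS : F) (X : State F U) : U := X.interp trueS []

/-- The interpretation of the nullary symbol `falseS` in state `X`. -/
def fval {F U : Type} (falseS : F) (X : State F U) : U := X.interp falseS []

/-- `X ⊨ C`: the term `C` evaluates in `X` to the interpretation of true. -/
def Holds {F U : Type} (trueS : F) (X : State F U) (C : GTerm F) : Prop :=
  evalT X C = tval trueS X

/-- A location–value pair `f(ā) ↦ b`. -/
abbrev Update (F U : Type) : Type := (F × List U) × U

/-- Two states agree on the values of all terms of `T`. -/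
def AgreeOn {F U : Type} (T : Set (GTerm F)) (X Y : State F U) : Prop :=
  ∀ t ∈ T, evalT X t = evalT Y t

/-- A term takes opposite truth values in `X` and `Y`. -/
def OppVals {F U : Type} (trueS falseS : F) (s : GTerm F) (X Y : State F U) : Prop :=
  (evalT X s = tval trueS X ∧ evalT Y s = fval falseS Y) ∨
  (evalT X s = fval falseS X ∧ evalT Y s = tval trueS Y)

/-- `lt` is a strict partial order whose field is contained in `T`. -/
def StrictOrderOn {F : Type} (T : Set (GTerm F)) (lt : GTerm F → GTerm F → Prop) : Prop :=
  (∀ s t, lt s t → s ∈ T ∧ t ∈ T) ∧ (∀ t, ¬ lt t t) ∧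
  (∀ r s t, lt r s → lt s t → lt r t)

/-- Abstract state machine programs over vocabulary `F`. -/
inductive Prog (F : Type) : Type where
  | assign : F → List (GTerm F) → GTerm F → Prog F
  | par : List (Prog F) → Prog F
  | cond : GTerm F → Prog F → Prog F

mutual
/-- The raw set of updates proposed by an ASM program in a state. -/
def updSet {F U : Type} (trueS : F) : Prog F → State F U → Set (Update F U)
  | Prog.assign f ss t, X => {((f, evalList X ss), evalT X t)}
  | Prog.par Ps, X => updSetList trueS Ps X
  | Prog.cond C P, X => {u | Holds trueS X C ∧ u ∈ updSet trueS P X}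

def updSetList {F U : Type} (trueS : F) : List (Prog F) → State F U → Set (Update F U)
  | [], _ => ∅
  | P :: Ps, X => updSet trueS P X ∪ updSetList trueS Ps X
end

/-- The program proposes two conflicting updates of the same location. -/
def Clash {F U : Type} (trueS : F) (P : Prog F) (X : State F U) : Prop :=
  ∃ l b b', (l, b) ∈ updSet trueS P X ∧ (l, b') ∈ updSet trueS P X ∧ b ≠ b'

/-- The proposed update set `Δ⁺_P(X)`; `none` is `⊥` (a clash). -/
noncomputable def DeltaPlus {F U : Type} (trueS : F) (P : Prog F) (X : State F U) :
    Option (Set (Update F U)) :=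
  if Clash trueS P X then none else some (updSet trueS P X)

/-- The update set `Δ_P(X)` of an ASM program: `⊥` when `Δ⁺` is `∅` or `⊥`,
and otherwise `Δ⁺` with all trivial updates removed. -/
noncomputable def DeltaASM {F U : Type} (trueS : F) (P : Prog F) (X : State F U) :
    Option (Set (Update F U)) :=
  if Clash trueS P X ∨ updSet trueS P X = ∅ then none
  else some {u ∈ updSet trueS P X | X.interp u.1.1 u.1.2 ≠ u.2}

mutual
/-- Raw explore terms of an ASM program in a state (before closing under
subterms and adding true and false). -/
def gamma0 {F U : Type} (trueS : F) : Prog F → State F U → Set (GTerm F)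
  | Prog.assign _ ss t, _ => {x | x ∈ ss} ∪ {t}
  | Prog.par Ps, X => gamma0List trueS Ps X
  | Prog.cond C P, X => {C} ∪ {x | Holds trueS X C ∧ x ∈ gamma0 trueS P X}

def gamma0List {F U : Type} (trueS : F) : List (Prog F) → State F U → Set (GTerm F)
  | [], _ => ∅
  | P :: Ps, X => gamma0 trueS P X ∪ gamma0List trueS Ps X
end

/-- The explore set `Γ_P(X)` of an ASM program: the raw explore terms
together with true and false, closed under subterms. -/
def GammaASM {F U : Type} (trueS falseS : F) (P : Prog F) (X : State F U) : Set (GTerm F) :=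
  {s | ∃ t, (t ∈ gamma0 trueS P X ∨ t = GTerm.app trueS [] ∨ t = GTerm.app falseS []) ∧
    Subterm s t}

/-- The graph of a state, as a set of location–value pairs over its base set. -/
def State.graph {F U : Type} (X : State F U) : Set (Update F U) :=
  {u | (∀ a ∈ u.1.2, a ∈ X.base) ∧ u.2 = X.interp u.1.1 u.1.2}

/-- `ζ` is an isomorphism of `F`-structures from `X` to `Y`. -/
def IsIso {F U : Type} (ζ : U → U) (X Y : State F U) : Prop :=
  Set.BijOn ζ X.base Y.base ∧
  ∀ (f : F) (as : List U), (∀ a ∈ as, a ∈ X.base) →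
    Y.interp f (as.map ζ) = ζ (X.interp f as)

/-- A nested conditional assignment: `if C₁ then if C₂ then ⋯ then A`,
where `A` is an assignment or the empty parallel statement. -/
inductive NestedCondAssign {F : Type} : Prog F → Prop where
  | assign (f : F) (ss : List (GTerm F)) (t : GTerm F) :
      NestedCondAssign (Prog.assign f ss t)
  | skip : NestedCondAssign (Prog.par [])
  | cond {P : Prog F} (C : GTerm F) :
      NestedCondAssign P → NestedCondAssign (Prog.cond C P)

/-- The shared explore terms `Γ(V) = ⋂_{X ∈ V} Γ(X)` of a set of states. -/
def sharedGamma {F U : Type} (Γ : State F U → Set (GTerm F)) (V : Set (State F U)) :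
    Set (GTerm F) :=
  ⋂ X ∈ V, Γ X

/-- `V` is agreeable: all states in `V` agree on the values of all shared explore terms. -/
def Agreeable {F U : Type} (Γ : State F U → Set (GTerm F)) (V : Set (State F U)) : Prop :=
  ∀ X ∈ V, ∀ Y ∈ V, AgreeOn (sharedGamma Γ V) X Y

/-- `V` is uniform: all states in `V` have the same explore set. -/
def Uniform {F U : Type} (Γ : State F U → Set (GTerm F)) (V : Set (State F U)) : Prop :=
  ∀ X ∈ V, ∀ Y ∈ V, Γ X = Γ Y

/-- The Discrimination property of the order `lt` at state `X`: `lt` is a partial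
order on `Γ(X)` and for every state `Y` and every `t ∈ Γ(X) ∖ Γ(Y)` there is an
`s ∈ Γ(X)` with `s ≺_X t` taking opposite truth values in `X` and `Y`. -/
def Discriminates {F U : Type} (trueS falseS : F) (S : Set (State F U))
    (Γ : State F U → Set (GTerm F)) (X : State F U)
    (lt : GTerm F → GTerm F → Prop) : Prop :=
  StrictOrderOn (Γ X) lt ∧
  ∀ Y ∈ S, ∀ t ∈ Γ X \ Γ Y, ∃ s ∈ Γ X, lt s t ∧ OppVals trueS falseS s X Y

/-- An infinite sequence `X₁, X₂, …` of states and `s₁, s₂, …` of terms such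
that for all `i`, `s₁ ≺_{Xᵢ} s₂ ≺_{Xᵢ} ⋯ ≺_{Xᵢ} sᵢ`, where `sᵢ` takes opposite
truth values in `Xᵢ` and `Xⱼ` for every `j > i`. -/
def BadChain {F U : Type} (trueS falseS : F) (S : Set (State F U))
    (lt : State F U → GTerm F → GTerm F → Prop) : Prop :=
  ∃ (Xs : ℕ → State F U) (ss : ℕ → GTerm F),
    (∀ i, Xs i ∈ S) ∧
    (∀ i j, j < i → lt (Xs i) (ss j) (ss (j + 1))) ∧
    (∀ i j, i < j → OppVals trueS falseS (ss i) (Xs i) (Xs j))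

/-! Explore sets depend on the state only through the guards of conditionals. A guard `C` of
`if C then P` lies in every explore set of the program, together with `true`, so on an
agreeable set of states `C` is either true everywhere or false everywhere. By induction on
the program, all states of the set therefore explore the same terms. -/

section

variable {F U : Type} {trueS falseS : F}

lemma gamma0_subset_gammaASM (P : Prog F) (Z : State F U) :
    gamma0 trueS P Z ⊆ GammaASM trueS falseS P Z :=
  fun t ht => ⟨t, Or.inl ht, Subterm.refl t⟩

lemma true_mem_gammaASM (P : Prog F) (Z : State F U) :
    GTerm.app trueS [] ∈ GammaASM trueS falseS P Z :=
  ⟨_, Or.inr (Or.inl rfl), Subterm.refl _⟩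

lemma gammaASM_mono {P Q : Prog F} {Z : State F U}
    (h : gamma0 trueS P Z ⊆ gamma0 trueS Q Z) :
    GammaASM trueS falseS P Z ⊆ GammaASM trueS falseS Q Z := by
  rintro s ⟨t, ht, hsub⟩
  exact ⟨t, ht.imp_left (@h t), hsub⟩

lemma evalT_true (Z : State F U) : evalT Z (GTerm.app trueS []) = tval trueS Z := by
  simp [evalT, evalList, tval]

lemma gamma0_cond_of_holds {C : GTerm F} {P : Prog F} {Z : State F U}
    (hC : Holds trueS Z C) : gamma0 trueS (Prog.cond C P) Z = insert C (gamma0 trueS P Z) := by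
  ext x
  simp [gamma0, hC]

lemma gamma0_cond_of_not_holds {C : GTerm F} {P : Prog F} {Z : State F U}
    (hC : ¬ Holds trueS Z C) : gamma0 trueS (Prog.cond C P) Z = {C} := by
  ext x
  simp [gamma0, hC]

lemma Uniform.gammaASM {P : Prog F} {V : Set (State F U)}
    (h : Uniform (gamma0 trueS P) V) : Uniform (GammaASM trueS falseS P) V := by
  intro X hX Y hY
  simp only [GammaASM, h X hX Y hY]

end

section

variable {F U : Type} {V : Set (State F U)} {Γ Γ' : State F U → Set (GTerm F)}

lemma Agreeable.anti (hsub : ∀ Z ∈ V, Γ Z ⊆ Γ' Z) (h : Agreeable Γ' V) : Agreeable Γ V :=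
  fun X hX Y hY t ht => h X hX Y hY t <| by
    simp only [sharedGamma, Set.mem_iInter] at ht ⊢
    exact fun Z hZ => hsub Z hZ (ht Z hZ)

lemma Agreeable.holds_iff {trueS : F} {C : GTerm F} (h : Agreeable Γ V)
    (hC : ∀ Z ∈ V, C ∈ Γ Z) (htrue : ∀ Z ∈ V, GTerm.app trueS [] ∈ Γ Z)
    {X Y : State F U} (hX : X ∈ V) (hY : Y ∈ V) :
    Holds trueS X C ↔ Holds trueS Y C := by
  have hshared : ∀ t, (∀ Z ∈ V, t ∈ Γ Z) → t ∈ sharedGamma Γ V := fun t ht => by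
    simpa only [sharedGamma, Set.mem_iInter] using ht
  have hCval := h X hX Y hY C (hshared C hC)
  have htrueval := h X hX Y hY _ (hshared _ htrue)
  rw [evalT_true, evalT_true] at htrueval
  rw [Holds, Holds, hCval, htrueval]

end

section

variable {F U : Type} (trueS falseS : F) (V : Set (State F U))

mutual

theorem Agreeable.uniform_gamma0 :
    ∀ P : Prog F, Agreeable (GammaASM trueS falseS P) V → Uniform (gamma0 trueS P) V
  | Prog.assign _ _ _, _, _, _, _, _ => rfl
  | Prog.par Ps, h, X, hX, Y, hY => Agreeable.uniform_gamma0List Ps h X hX Y hY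
  | Prog.cond C P, h, X, hX, Y, hY => by
    have hguard {Z W : State F U} (hZ : Z ∈ V) (hW : W ∈ V) :
        Holds trueS Z C ↔ Holds trueS W C :=
      h.holds_iff (fun Z _ => gamma0_subset_gammaASM _ Z (Or.inl rfl))
        (fun Z _ => true_mem_gammaASM _ Z) hZ hW
    by_cases hCX : Holds trueS X C
    · have hbody : Agreeable (GammaASM trueS falseS P) V := by
        refine h.anti fun Z hZ => gammaASM_mono ?_
        rw [gamma0_cond_of_holds ((hguard hX hZ).mp hCX)]
        exact Set.subset_insert _ _
      rw [gamma0_cond_of_holds hCX, gamma0_cond_of_holds ((hguard hX hY).mp hCX),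
        Agreeable.uniform_gamma0 P hbody X hX Y hY]
    · rw [gamma0_cond_of_not_holds hCX, gamma0_cond_of_not_holds ((hguard hX hY).not.mp hCX)]

theorem Agreeable.uniform_gamma0List :
    ∀ Ps : List (Prog F),
      Agreeable (GammaASM trueS falseS (Prog.par Ps)) V → Uniform (gamma0List trueS Ps) V
  | [], _, _, _, _, _ => rfl
  | P :: Ps, h, X, hX, Y, hY => by
    have hhead : Agreeable (GammaASM trueS falseS P) V :=
      h.anti fun _ _ => gammaASM_mono Set.subset_union_left
    have htail : Agreeable (GammaASM trueS falseS (Prog.par Ps)) V :=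
      h.anti fun _ _ => gammaASM_mono Set.subset_union_right
    rw [gamma0List, gamma0List, Agreeable.uniform_gamma0 P hhead X hX Y hY,
      Agreeable.uniform_gamma0List Ps htail X hX Y hY]

end

end

/-- For any ASM program, agreeability implies uniformity for its explore sets:
if all states of `V` agree on the values of all terms in
`Γ_P(V) := ⋂_{X∈V} Γ_P(X)`, then `Γ_P(X) = Γ_P(Y)` for all `X, Y ∈ V`. -/
theorem asm_agreeable_implies_uniform {F U : Type} [Finite F] (trueS falseS : F)
    (P : Prog F) (V : Set (State F U))
    (hagree : Agreeable (GammaASM trueS falseS P) V) :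
    Uniform (GammaASM trueS falseS P) V :=
  (hagree.uniform_gamma0 trueS falseS V P).gammaASM
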